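/- arXiv:2511.20529 — 3 statements merged into one kernel-verified Lean document; each statement's English description precedes it below -/
import Mathlib

section
/- The histopolation functions h_1, …, h_N, regarded as functions on [a,b], are linearly independent over ℝ. -/
/-!
`h i` is the derivative within `[a,b]` of `H i := -∑_{j<i} l j`, so a combination `∑ c i * h i`
vanishing on `[a,b]` makes `∑ c i * H i` constant there. By the Lagrange property
`H i (x k) = -[k < i]`, and comparing the values of `∑ c i * H i` at the consecutive grid
points `x (k - 1)` and `x k` isolates `c k`.
-/

open Finset

theorem Convex.eq_of_hasDerivWithinAt_zero {𝕜 G : Type*} [RCLike 𝕜] [NormedAddCommGroup G]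
    [NormedSpace 𝕜 G] {f : 𝕜 → G} {s : Set 𝕜} (hs : Convex ℝ s)
    (hf : ∀ t ∈ s, HasDerivWithinAt f 0 s t) {y z : 𝕜} (hy : y ∈ s) (hz : z ∈ s) :
    f y = f z := by
  have := hs.norm_image_sub_le_of_norm_hasDerivWithin_le hf (fun _ _ => norm_zero.le) hz hy
  rwa [zero_mul, norm_le_zero_iff, sub_eq_zero] at this

theorem hasDerivWithinAt_neg_sum_range {l : ℕ → ℝ → ℝ} {s : Set ℝ} {t : ℝ} {i : ℕ}
    (hl : ∀ j < i, DifferentiableWithinAt ℝ (l j) s t) :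
    HasDerivWithinAt (fun u => -∑ j ∈ range i, l j u)
      (-∑ j ∈ range i, derivWithin (l j) s t) s t :=
  (HasDerivWithinAt.fun_sum fun j hj => (hl j (mem_range.mp hj)).hasDerivWithinAt).neg

theorem sum_range_eq_ite_lt_of_lagrange {R α : Type*} [AddCommMonoidWithOne R]
    {l : ℕ → α → R} {x : ℕ → α} {i k : ℕ}
    (hlag : ∀ j < i, l j (x k) = if j = k then 1 else 0) :
    ∑ j ∈ range i, l j (x k) = if k < i then 1 else 0 := by
  rw [sum_congr rfl fun j hj => hlag j (mem_range.mp hj), sum_ite_eq']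
  simp only [mem_range]

theorem sum_mul_ite_lt_sub_sum_mul_ite_succ_lt {R : Type*} [Ring R] (s : Finset ℕ) (c : ℕ → R)
    {k : ℕ} (hk : k + 1 ∈ s) :
    ∑ m ∈ s, c m * (if k < m then 1 else 0) - ∑ m ∈ s, c m * (if k + 1 < m then 1 else 0)
      = c (k + 1) := by
  rw [← sum_sub_distrib]
  have hterm : ∀ m, c m * (if k < m then 1 else 0) - c m * (if k + 1 < m then 1 else 0)
      = if m = k + 1 then c m else 0 := by
    intro m
    split_ifs <;> first | omega | simp
  simp only [hterm, sum_ite_eq', hk, if_true]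

theorem histopolation_linear_independent_general
    (N : ℕ) (a b : ℝ) (x : ℕ → ℝ)
    (hx0 : x 0 = a) (hxN : x N = b)
    (hgrid : ∀ i, i < N → x i < x (i + 1))
    (l : ℕ → ℝ → ℝ)
    (hC1 : ∀ i ≤ N, ContDiffOn ℝ 1 (l i) (Set.Icc a b))
    (hlag : ∀ i ≤ N, ∀ j ≤ N, l i (x j) = if i = j then (1 : ℝ) else 0)
    (h : ℕ → ℝ → ℝ)
    (hdef : ∀ i, 1 ≤ i → i ≤ N → ∀ t : ℝ,
      h i t = -∑ j ∈ Finset.range i, derivWithin (l j) (Set.Icc a b) t) :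
    ∀ c : ℕ → ℝ,
      (∀ t ∈ Set.Icc a b, ∑ i ∈ Finset.Icc 1 N, c i * h i t = 0) →
      ∀ i, 1 ≤ i → i ≤ N → c i = 0 := by
  intro c hc i hi1 hiN
  obtain ⟨k, rfl⟩ : ∃ k, i = k + 1 := ⟨i - 1, by omega⟩
  set H : ℕ → ℝ → ℝ := fun m t => -∑ j ∈ range m, l j t
  have hx : ∀ k ≤ N, x k ∈ Set.Icc a b := fun k hk => by
    have hmono : MonotoneOn x (Set.Icc 0 N) :=
      (strictMonoOn_Iic_of_lt_succ hgrid).monotoneOn.mono Set.Icc_subset_Iic_self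
    simpa [hx0, hxN] using hmono.mapsTo_Icc ⟨k.zero_le, hk⟩
  have hH : ∀ t ∈ Set.Icc a b, HasDerivWithinAt (fun t => ∑ m ∈ Icc 1 N, c m * H m t)
      (∑ m ∈ Icc 1 N, c m * h m t) (Set.Icc a b) t := fun t ht =>
    HasDerivWithinAt.fun_sum fun m hm => by
      obtain ⟨hm1, hmN⟩ := mem_Icc.mp hm
      rw [hdef m hm1 hmN]
      exact (hasDerivWithinAt_neg_sum_range fun j hj =>
        ((hC1 j (by omega)).differentiableOn one_ne_zero) t ht).const_mul (c m)
  have hconst : ∑ m ∈ Icc 1 N, c m * H m (x k) = ∑ m ∈ Icc 1 N, c m * H m (x (k + 1)) :=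
    (convex_Icc a b).eq_of_hasDerivWithinAt_zero (fun t ht => hc t ht ▸ hH t ht)
      (hx k (by omega)) (hx (k + 1) hiN)
  have hval : ∀ k ≤ N, ∑ m ∈ Icc 1 N, c m * H m (x k)
      = -∑ m ∈ Icc 1 N, c m * if k < m then 1 else 0 := fun k hk => by
    rw [← sum_neg_distrib]
    refine sum_congr rfl fun m hm => ?_
    rw [← sum_range_eq_ite_lt_of_lagrange fun j hj => hlag j (by simp at hm; omega) k hk, ← mul_neg]
  have hdiff := sum_mul_ite_lt_sub_sum_mul_ite_succ_lt (Icc 1 N) c (k := k) (by simp; omega)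
  rw [hval k (by omega), hval (k + 1) hiN] at hconst
  linarith

/-- The histopolation functions `h 1, …, h N`, regarded as functions on
`[a,b]`, are linearly independent over ℝ: any linear combination vanishing on `[a,b]`
has all coefficients zero. -/
theorem histopolation_linear_independent
    (N : ℕ) (hN : 1 ≤ N) (a b : ℝ) (x : ℕ → ℝ)
    (hx0 : x 0 = a) (hxN : x N = b)
    (hgrid : ∀ i, i < N → x i < x (i + 1))
    (l : ℕ → ℝ → ℝ)
    (hC1 : ∀ i ≤ N, ContDiffOn ℝ 1 (l i) (Set.Icc a b))
    (hlag : ∀ i ≤ N, ∀ j ≤ N, l i (x j) = if i = j then (1 : ℝ) else 0)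
    (h : ℕ → ℝ → ℝ)
    (hdef : ∀ i, 1 ≤ i → i ≤ N → ∀ t : ℝ,
      h i t = -∑ j ∈ Finset.range i, derivWithin (l j) (Set.Icc a b) t) :
    ∀ c : ℕ → ℝ,
      (∀ t ∈ Set.Icc a b, ∑ i ∈ Finset.Icc 1 N, c i * h i t = 0) →
      ∀ i, 1 ≤ i → i ≤ N → c i = 0 :=
  histopolation_linear_independent_general N a b x hx0 hxN hgrid l hC1 hlag h hdef
end

section
/- Assume ∑_{i=0}^N l_i(x) = 1 for all x ∈ [a,b]. Then interpolation and histopolation commute with differentiation: for every continuously differentiable function f : [a,b] → ℝ, the identity d/dx p⁰(f)(x) = p¹(f′)(x) holds for all x ∈ [a,b], i.e. ∑_{i=0}^N f(x_i) l_i′(x) = ∑_{j=1}^N (f(x_j) − f(x_{j−1})) h_j(x). -/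
/-!
Since `∑ lᵢ ≡ 1`, the derivatives `lᵢ'` sum to zero, so Abel summation against the partial sums
`-hⱼ` rewrites `∑ f(xᵢ) lᵢ'` as `∑ⱼ (f(xⱼ) - f(xⱼ₋₁)) hⱼ`. The fundamental theorem of calculus on
each cell `[xⱼ₋₁, xⱼ]` identifies `f(xⱼ) - f(xⱼ₋₁)` with the histopolation coefficient of `f'`.
-/

open Finset Set

theorem Finset.sum_range_smul_eq_sum_Icc_sub_smul_neg_sum_range {R M : Type*} [Ring R]
    [AddCommGroup M] [Module R M] (n : ℕ) (c : ℕ → R) (D : ℕ → M)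
    (hD : ∑ i ∈ range (n + 1), D i = 0) :
    ∑ i ∈ range (n + 1), c i • D i
      = ∑ j ∈ Icc 1 n, (c j - c (j - 1)) • -∑ k ∈ range j, D k := by
  rw [sum_range_by_parts, add_tsub_cancel_right, hD, smul_zero, zero_sub,
    ← Ico_add_one_right_eq_Icc, sum_Ico_eq_sum_range, add_tsub_cancel_right, ← sum_neg_distrib]
  refine sum_congr rfl fun i _ => ?_
  rw [add_comm 1 i, add_tsub_cancel_right, smul_neg]

theorem intervalIntegral.integral_derivWithin_Icc_of_contDiffOn_Icc_of_subset {f : ℝ → ℝ}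
    {a b u v : ℝ} (hf : ContDiffOn ℝ 1 f (Icc a b)) (hau : a ≤ u) (huv : u ≤ v) (hvb : v ≤ b) :
    ∫ s in u..v, derivWithin f (Icc a b) s = f v - f u := by
  rw [← integral_derivWithin_Icc_of_contDiffOn_Icc (hf.mono (Icc_subset_Icc hau hvb)) huv,
    integral_of_le huv, integral_of_le huv, ← MeasureTheory.restrict_Ioo_eq_restrict_Ioc]
  refine MeasureTheory.integral_congr_ae ?_
  filter_upwards [MeasureTheory.self_mem_ae_restrict measurableSet_Ioo] with s hs
  rw [derivWithin_of_mem_nhds (Icc_mem_nhds (hau.trans_lt hs.1) (hs.2.trans_le hvb)),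
    derivWithin_of_mem_nhds (Icc_mem_nhds hs.1 hs.2)]

section
variable {𝕜 ι : Type*} [NontriviallyNormedField 𝕜] {u : Finset ι} {l : ι → 𝕜 → 𝕜} {s : Set 𝕜}
  {t : 𝕜}

theorem derivWithin_sum_const_mul (c : ι → 𝕜)
    (hl : ∀ i ∈ u, DifferentiableWithinAt 𝕜 (l i) s t) :
    derivWithin (fun y => ∑ i ∈ u, c i * l i y) s t = ∑ i ∈ u, c i * derivWithin (l i) s t := by
  rw [derivWithin_fun_sum fun i hi => (hl i hi).const_mul (c i)]
  exact sum_congr rfl fun i hi => derivWithin_const_mul (c i) (hl i hi)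

theorem sum_derivWithin_eq_zero_of_sum_eq_const {C : 𝕜}
    (hl : ∀ i ∈ u, DifferentiableWithinAt 𝕜 (l i) s t)
    (hC : ∀ y ∈ s, ∑ i ∈ u, l i y = C) (ht : t ∈ s) :
    ∑ i ∈ u, derivWithin (l i) s t = 0 := by
  rw [← derivWithin_fun_sum hl, derivWithin_congr hC (hC t ht), derivWithin_fun_const,
    Pi.zero_apply]

end

theorem interpolation_commutes_with_derivative_general
    (N : ℕ) (a b : ℝ) (x : ℕ → ℝ)
    (hx0 : x 0 = a) (hxN : x N = b)
    (hgrid : ∀ i, i < N → x i < x (i + 1))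
    (l : ℕ → ℝ → ℝ)
    (hC1 : ∀ i ≤ N, ContDiffOn ℝ 1 (l i) (Set.Icc a b))
    (h : ℕ → ℝ → ℝ)
    (hdef : ∀ i, 1 ≤ i → i ≤ N → ∀ t : ℝ,
      h i t = -∑ j ∈ Finset.range i, derivWithin (l j) (Set.Icc a b) t)
    (hone : ∀ t ∈ Set.Icc a b, ∑ i ∈ Finset.range (N + 1), l i t = 1)
    (f : ℝ → ℝ) (hf : ContDiffOn ℝ 1 f (Set.Icc a b)) :
    ∀ t ∈ Set.Icc a b,
      derivWithin (fun s => ∑ i ∈ Finset.range (N + 1), f (x i) * l i s)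
          (Set.Icc a b) t
        = ∑ j ∈ Finset.Icc 1 N,
            (∫ s in (x (j - 1))..(x j), derivWithin f (Set.Icc a b) s) * h j t ∧
      ∑ i ∈ Finset.range (N + 1), f (x i) * derivWithin (l i) (Set.Icc a b) t
        = ∑ j ∈ Finset.Icc 1 N, (f (x j) - f (x (j - 1))) * h j t := by
  intro t ht
  have hmono : MonotoneOn x (Set.Iic N) :=
    monotoneOn_of_le_add_one ordConnected_Iic fun i _ _ hi => (hgrid i hi).le
  have hl : ∀ i ∈ range (N + 1), DifferentiableWithinAt ℝ (l i) (Icc a b) t := fun i hi =>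
    (hC1 i (Nat.lt_succ_iff.mp (mem_range.mp hi))).differentiableOn one_ne_zero t ht
  have hsum_zero := sum_derivWithin_eq_zero_of_sum_eq_const hl hone ht
  have habel : ∑ i ∈ range (N + 1), f (x i) * derivWithin (l i) (Icc a b) t
      = ∑ j ∈ Icc 1 N, (f (x j) - f (x (j - 1))) * h j t := by
    have hsummation :=
      sum_range_smul_eq_sum_Icc_sub_smul_neg_sum_range N (fun i => f (x i)) _ hsum_zero
    simp only [smul_eq_mul] at hsummation
    rw [hsummation]
    refine sum_congr rfl fun j hj => ?_
    rw [hdef j (mem_Icc.mp hj).1 (mem_Icc.mp hj).2]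
  refine ⟨?_, habel⟩
  rw [derivWithin_sum_const_mul _ hl, habel]
  refine sum_congr rfl fun j hj => ?_
  have hjN := (mem_Icc.mp hj).2
  have hj1N : j - 1 ≤ N := by omega
  rw [intervalIntegral.integral_derivWithin_Icc_of_contDiffOn_Icc_of_subset hf
    (hx0 ▸ hmono (Nat.zero_le N) hj1N (Nat.zero_le _)) (hmono hj1N hjN (Nat.sub_le j 1))
    (hxN ▸ hmono hjN (le_refl N) hjN)]

/-- Assuming `∑ l i ≡ 1` on `[a,b]`, interpolation and histopolation
commute with differentiation: for every C¹ function `f` on `[a,b]`,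
`(p⁰ f)' = p¹ (f')` on `[a,b]`, i.e.
`∑_{i=0}^N f (x i) * l i' (t) = ∑_{j=1}^N (f (x j) - f (x (j-1))) * h j t`. -/
theorem interpolation_commutes_with_derivative
    (N : ℕ) (hN : 1 ≤ N) (a b : ℝ) (x : ℕ → ℝ)
    (hx0 : x 0 = a) (hxN : x N = b)
    (hgrid : ∀ i, i < N → x i < x (i + 1))
    (l : ℕ → ℝ → ℝ)
    (hC1 : ∀ i ≤ N, ContDiffOn ℝ 1 (l i) (Set.Icc a b))
    (hlag : ∀ i ≤ N, ∀ j ≤ N, l i (x j) = if i = j then (1 : ℝ) else 0)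
    (h : ℕ → ℝ → ℝ)
    (hdef : ∀ i, 1 ≤ i → i ≤ N → ∀ t : ℝ,
      h i t = -∑ j ∈ Finset.range i, derivWithin (l j) (Set.Icc a b) t)
    (hone : ∀ t ∈ Set.Icc a b, ∑ i ∈ Finset.range (N + 1), l i t = 1)
    (f : ℝ → ℝ) (hf : ContDiffOn ℝ 1 f (Set.Icc a b)) :
    ∀ t ∈ Set.Icc a b,
      derivWithin (fun s => ∑ i ∈ Finset.range (N + 1), f (x i) * l i s)
          (Set.Icc a b) t
        = ∑ j ∈ Finset.Icc 1 N,
            (∫ s in (x (j - 1))..(x j), derivWithin f (Set.Icc a b) s) * h j t ∧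
      ∑ i ∈ Finset.range (N + 1), f (x i) * derivWithin (l i) (Set.Icc a b) t
        = ∑ j ∈ Finset.Icc 1 N, (f (x j) - f (x (j - 1))) * h j t :=
  interpolation_commutes_with_derivative_general N a b x hx0 hxN hgrid l hC1 h hdef hone f hf
end

section
/- Invertibility of the histopolation mass matrix: let D be a real (N+1)×(N+1) matrix of rank N whose kernel contains the constant vectors (D·𝟙 = 0, where 𝟙 is the all-ones vector), and define the (N+1)×N matrix V by V_{k,i} = −∑_{j=0}^{i−1} D_{k,j} for i = 1,…,N. Then V has full column rank N, and consequently for any diagonal (N+1)×(N+1) matrix M with strictly positive diagonal entries, the histopolation mass matrix Vᵀ M V is symmetric positive definite (and in particular invertible). -/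
/-!
Writing `S` for the matrix of tail sums `(S x)_j = ∑_{i ≥ j} x_i`, the definition of `V` reads
`V = -D S`. If `V x = 0`, then `S x` lies in the kernel of `D`, which by the rank hypothesis is
spanned by the constants; but consecutive entries of `S x` differ by the entries of `x`, so `S x`
constant forces `x = 0`. Hence `V` is injective, and `Vᵀ M V` is positive definite as a congruence
of the positive definite diagonal matrix `M` by an injective map.
-/

open Matrix

namespace Matrix

theorem rank_eq_card_of_mulVec_injective {R : Type*} [CommRing R] [StrongRankCondition R]
    {m n : Type*} [Fintype m] [Fintype n] (A : Matrix m n R) (hA : Function.Injective A.mulVec) :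
    A.rank = Fintype.card n := by
  rw [rank, LinearMap.finrank_range_of_inj hA, Module.finrank_fintype_fun_eq_card]

theorem ker_mulVecLin_eq_span_singleton {K : Type*} [Field K] {n : Type*} [Fintype n]
    {D : Matrix n n K} (hrank : D.rank + 1 = Fintype.card n) {v : n → K} (hv : D *ᵥ v = 0)
    (hv0 : v ≠ 0) : LinearMap.ker D.mulVecLin = K ∙ v := by
  refine (Submodule.eq_of_le_of_finrank_le ?_ ?_).symm
  · simpa [Submodule.span_le, LinearMap.mem_ker] using hv
  · have := LinearMap.finrank_range_add_finrank_ker D.mulVecLin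
    rw [Module.finrank_fintype_fun_eq_card, ← hrank, rank] at this
    rw [finrank_span_singleton hv0]
    omega

/-- `tailSumMatrix R N *ᵥ x` is the vector `j ↦ ∑_{i ≥ j} x i` of length `N + 1`, whose last
entry is the empty sum. -/
def tailSumMatrix (R : Type*) [Zero R] [One R] (N : ℕ) : Matrix (Fin (N + 1)) (Fin N) R :=
  of fun j i => if (j : ℕ) ≤ i then 1 else 0

section TailSum

variable {R : Type*} [Ring R] {N : ℕ}

theorem tailSumMatrix_mulVec_castSucc_sub_succ (x : Fin N → R) (i : Fin N) :
    (tailSumMatrix R N *ᵥ x) i.castSucc - (tailSumMatrix R N *ᵥ x) i.succ = x i := by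
  simp only [tailSumMatrix, mulVec, dotProduct, of_apply, ite_mul, one_mul, zero_mul,
    ← Finset.sum_sub_distrib, Fin.val_castSucc, Fin.val_succ]
  rw [Finset.sum_eq_single i]
  · simp
  · intro i' _ hi'
    have : (i' : ℕ) ≠ i := Fin.val_ne_of_ne hi'
    split_ifs <;> first | omega | simp
  · simp

theorem eq_zero_of_tailSumMatrix_mulVec_eq_const {x : Fin N → R} {c : R}
    (hx : tailSumMatrix R N *ᵥ x = fun _ => c) : x = 0 := by
  funext i
  rw [← tailSumMatrix_mulVec_castSucc_sub_succ x i, hx, sub_self, Pi.zero_apply]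

end TailSum

theorem mul_tailSumMatrix_mulVec_injective {K : Type*} [Field K] {N : ℕ}
    {D : Matrix (Fin (N + 1)) (Fin (N + 1)) K}
    (hker : LinearMap.ker D.mulVecLin = K ∙ (fun _ => 1)) :
    Function.Injective (D * tailSumMatrix K N).mulVec := by
  refine (LinearMap.ker_eq_bot (f := (D * tailSumMatrix K N).mulVecLin)).mp ?_
  refine ker_mulVecLin_eq_bot_iff.mpr fun x hx => ?_
  have hmem : tailSumMatrix K N *ᵥ x ∈ LinearMap.ker D.mulVecLin := by
    rwa [LinearMap.mem_ker, mulVecLin_apply, mulVec_mulVec]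
  rw [hker] at hmem
  obtain ⟨c, hc⟩ := Submodule.mem_span_singleton.mp hmem
  exact eq_zero_of_tailSumMatrix_mulVec_eq_const (by rw [← hc]; rfl)

end Matrix

theorem histopolation_mass_matrix_pos_def_general
    (N : ℕ)
    (D : Matrix (Fin (N + 1)) (Fin (N + 1)) ℝ)
    (hrank : D.rank = N)
    (hker : D *ᵥ (fun _ => (1 : ℝ)) = 0)
    (V : Matrix (Fin (N + 1)) (Fin N) ℝ)
    (hV : ∀ k i, V k i = -∑ j : Fin (N + 1), if (j : ℕ) ≤ (i : ℕ) then D k j else 0) :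
    V.rank = N ∧
    ∀ w : Fin (N + 1) → ℝ, (∀ k, 0 < w k) →
      (Vᵀ * Matrix.diagonal w * V).PosDef ∧ IsUnit (Vᵀ * Matrix.diagonal w * V) := by
  have hV_eq : V = -(D * tailSumMatrix ℝ N) := by
    ext k i
    rw [hV, Matrix.neg_apply, Matrix.mul_apply]
    simp [tailSumMatrix]
  have hkerD : LinearMap.ker D.mulVecLin = ℝ ∙ (fun _ => 1) :=
    ker_mulVecLin_eq_span_singleton (by simp [hrank]) hker (Function.ne_iff.mpr ⟨0, one_ne_zero⟩)
  have hinj : Function.Injective V.mulVec := by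
    have hV_mulVec : V.mulVec = Neg.neg ∘ (D * tailSumMatrix ℝ N).mulVec :=
      funext fun x => hV_eq ▸ neg_mulVec x _
    exact hV_mulVec ▸ neg_injective.comp (mul_tailSumMatrix_mulVec_injective hkerD)
  refine ⟨by simpa using rank_eq_card_of_mulVec_injective V hinj, fun w hw => ?_⟩
  have hpd := (PosDef.diagonal hw).conjTranspose_mul_mul_same hinj
  rw [conjTranspose_eq_transpose_of_trivial] at hpd
  exact ⟨hpd, hpd.isUnit⟩

/-- Invertibility of the histopolation mass matrix. If the
`(N+1) × (N+1)` matrix `D` has rank `N` and annihilates the constant vectors,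
then the histopolation Vandermonde matrix `V k i = -∑_{j ≤ i} D k j` (with
`i : Fin N` representing the 1-based index `i+1`) has full column rank `N`, and
for every diagonal matrix `M` with strictly positive diagonal entries the
histopolation mass matrix `Vᵀ M V` is symmetric positive definite, in particular
invertible. -/
theorem histopolation_mass_matrix_pos_def
    (N : ℕ) (hN : 1 ≤ N)
    (D : Matrix (Fin (N + 1)) (Fin (N + 1)) ℝ)
    (hrank : D.rank = N)
    (hker : D *ᵥ (fun _ => (1 : ℝ)) = 0)
    (V : Matrix (Fin (N + 1)) (Fin N) ℝ)
    (hV : ∀ k i, V k i = -∑ j : Fin (N + 1), if (j : ℕ) ≤ (i : ℕ) then D k j else 0) :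
    V.rank = N ∧
    ∀ w : Fin (N + 1) → ℝ, (∀ k, 0 < w k) →
      (Vᵀ * Matrix.diagonal w * V).PosDef ∧ IsUnit (Vᵀ * Matrix.diagonal w * V) :=
  histopolation_mass_matrix_pos_def_general N D hrank hker V hV
end
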